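/- arXiv:1710.00097 — 5 statements merged into one kernel-verified Lean document; each statement's English description precedes it below -/
import Mathlib

section
/- Let φ : R → Q be an injective ring epimorphism with Tor_1^R(Q, Q) = 0, and set K = Q/φ(R). Then K ⊗_R Q = 0 and Tor_1^R(K, Q) = 0. -/
open MulOpposite

universe u

/-- `φ : R →+* Q` is an epimorphism in the category of rings. -/
def IsRingEpi {R Q : Type u} [Ring R] [Ring Q] (φ : R →+* Q) : Prop :=
  ∀ (T : Type u) [Ring T] (ψ ω : Q →+* T), ψ.comp φ = ω.comp φ → ψ = ω

section NCTensor

variable (R : Type u) [Ring R] (M : Type u) [AddCommGroup M] [Module Rᵐᵒᵖ M]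
  (N : Type u) [AddCommGroup N] [Module R N]

/-- Relations defining the tensor product `M ⊗_R N` of a right `R`-module `M`
and a left `R`-module `N` over a (possibly noncommutative) ring `R`. -/
def ncRels : AddSubgroup (FreeAbelianGroup (M × N)) :=
  AddSubgroup.closure
    ({x | ∃ m m' n, x = FreeAbelianGroup.of (m + m', n) - FreeAbelianGroup.of (m, n) -
        FreeAbelianGroup.of (m', n)} ∪
     {x | ∃ m n n', x = FreeAbelianGroup.of (m, n + n') - FreeAbelianGroup.of (m, n) -
        FreeAbelianGroup.of (m, n')} ∪
     {x | ∃ (r : R) (m : M) (n : N), x = FreeAbelianGroup.of (op r • m, n) -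
        FreeAbelianGroup.of (m, r • n)})

/-- The tensor product `M ⊗_R N` of a right `R`-module and a left `R`-module over a
(possibly noncommutative) ring `R`, as an abelian group. -/
def NCTensor : Type u := FreeAbelianGroup (M × N) ⧸ ncRels R M N

instance : AddCommGroup (NCTensor R M N) :=
  QuotientAddGroup.Quotient.addCommGroup _

/-- The pure tensor `m ⊗ n` in `M ⊗_R N`. -/
def NCTensor.tmul (m : M) (n : N) : NCTensor R M N :=
  QuotientAddGroup.mk (FreeAbelianGroup.of (m, n))

end NCTensor

/-- `Tor_1^R(X, N) = 0`, for a right `R`-module `X` and a left `R`-module `N`: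
for every presentation `0 → A → B → X → 0` of `X` with `B` projective, the induced map
`A ⊗_R N → B ⊗_R N` is injective. -/
def Tor1Zero (R : Type u) [Ring R] (X : Type u) [AddCommGroup X] [Module Rᵐᵒᵖ X]
    (N : Type u) [AddCommGroup N] [Module R N] : Prop :=
  ∀ (A B : Type u) [AddCommGroup A] [AddCommGroup B] [Module Rᵐᵒᵖ A] [Module Rᵐᵒᵖ B]
    (i : A →ₗ[Rᵐᵒᵖ] B) (p : B →ₗ[Rᵐᵒᵖ] X),
    Module.Projective Rᵐᵒᵖ B → Function.Injective i → Function.Surjective p →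
    LinearMap.range i = LinearMap.ker p →
    ∀ g : NCTensor R A N →+ NCTensor R B N,
      (∀ a n, g (NCTensor.tmul R A N a n) = NCTensor.tmul R B N (i a) n) →
      Function.Injective g

section Kmod

variable {R Q : Type u} [Ring R] [Ring Q] (φ : R →+* Q) [Module Rᵐᵒᵖ Q]
  (hr : ∀ (r : R) (q : Q), op r • q = q * φ r)

/-- The image of `φ`, as a submodule of the right `R`-module `Q`. -/
def phiRange : Submodule Rᵐᵒᵖ Q where
  carrier := Set.range φ
  add_mem' := by rintro x y ⟨a, rfl⟩ ⟨b, rfl⟩; exact ⟨a + b, map_add φ a b⟩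
  zero_mem' := ⟨0, map_zero φ⟩
  smul_mem' := by
    rintro c x ⟨a, rfl⟩
    refine ⟨a * c.unop, ?_⟩
    rw [map_mul]
    conv_rhs => rw [← MulOpposite.op_unop c, hr]

/-- `K = Q/φ(R)` as a right `R`-module. -/
abbrev Kmod := Q ⧸ phiRange φ hr

end Kmod

/-!
Since `φ` is an epimorphism, the derivation `q ↦ 1 ⊗ q - q ⊗ 1` of `Q` into the `Q`-bimodule
`Q ⊗_R Q` vanishes: together with `q ↦ (q, 0)` it gives two ring maps `Q → Q ⋉ (Q ⊗_R Q)` that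
agree on `R`. Hence `x ⊗ y = 1 ⊗ xy`, and in `K ⊗_R Q`, where `1` becomes `0`, every pure tensor
vanishes.

For `Tor`, the sequence `0 → R → Q → K → 0` gives `Tor₁(Q, Q) → Tor₁(K, Q) → R ⊗ Q → Q ⊗ Q`,
and the last map is injective because multiplication `Q ⊗_R Q → Q` turns it into
`R ⊗_R Q ≅ Q`. Concretely, given a projective presentation `0 → A → B → K → 0`, the fibre product
`B ×_K Q` is an extension of `B` by `R`, hence split and projective, and it is the middle term of
a presentation `0 → A → B ×_K Q → Q → 0` of `Q`.
-/

namespace NCTensor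

variable {R : Type u} [Ring R] {M : Type u} [AddCommGroup M] [Module Rᵐᵒᵖ M]
  {N : Type u} [AddCommGroup N] [Module R N]

def lift {T : Type u} [AddCommGroup T] (f : M → N → T)
    (h_add_left : ∀ m m' n, f (m + m') n = f m n + f m' n)
    (h_add_right : ∀ m n n', f m (n + n') = f m n + f m n')
    (h_smul : ∀ (r : R) m n, f (op r • m) n = f m (r • n)) :
    NCTensor R M N →+ T :=
  QuotientAddGroup.lift (ncRels R M N) (FreeAbelianGroup.lift fun p : M × N => f p.1 p.2) (by
    rw [ncRels, AddSubgroup.closure_le]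
    rintro x ((⟨m, m', n, rfl⟩ | ⟨m, n, n', rfl⟩) | ⟨r, m, n, rfl⟩) <;>
      · simp only [SetLike.mem_coe, AddMonoidHom.mem_ker, map_sub, FreeAbelianGroup.lift_apply_of,
          h_add_left, h_add_right, h_smul]
        abel)

@[simp]
theorem lift_tmul {T : Type u} [AddCommGroup T] (f : M → N → T) (h₁ h₂ h₃) (m : M) (n : N) :
    lift f h₁ h₂ h₃ (tmul R M N m n) = f m n :=
  FreeAbelianGroup.lift_apply_of _ _

theorem hom_ext {T : Type u} [AddCommGroup T] {f g : NCTensor R M N →+ T}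
    (h : ∀ m n, f (tmul R M N m n) = g (tmul R M N m n)) : f = g := by
  have key : f.comp (QuotientAddGroup.mk' (ncRels R M N)) =
      g.comp (QuotientAddGroup.mk' (ncRels R M N)) :=
    FreeAbelianGroup.lift_ext _ _ fun p => h p.1 p.2
  ext x
  obtain ⟨y, rfl⟩ := QuotientAddGroup.mk'_surjective (ncRels R M N) x
  exact DFunLike.congr_fun key y

theorem mk_eq_zero_of_mem {x : FreeAbelianGroup (M × N)} (hx : x ∈ ncRels R M N) :
    QuotientAddGroup.mk' (ncRels R M N) x = 0 :=
  (QuotientAddGroup.eq_zero_iff x).2 hx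

theorem add_tmul (m m' : M) (n : N) :
    tmul R M N (m + m') n = tmul R M N m n + tmul R M N m' n := by
  have h := mk_eq_zero_of_mem (R := R) (AddSubgroup.subset_closure (.inl (.inl ⟨m, m', n, rfl⟩)))
  rwa [map_sub, map_sub, sub_sub, sub_eq_zero, ← map_add] at h

theorem tmul_add (m : M) (n n' : N) :
    tmul R M N m (n + n') = tmul R M N m n + tmul R M N m n' := by
  have h := mk_eq_zero_of_mem (R := R) (AddSubgroup.subset_closure (.inl (.inr ⟨m, n, n', rfl⟩)))
  rwa [map_sub, map_sub, sub_sub, sub_eq_zero, ← map_add] at h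

theorem smul_tmul (r : R) (m : M) (n : N) :
    tmul R M N (op r • m) n = tmul R M N m (r • n) := by
  have h := mk_eq_zero_of_mem (R := R) (AddSubgroup.subset_closure (.inr ⟨r, m, n, rfl⟩))
  rwa [map_sub, sub_eq_zero] at h

theorem zero_tmul (n : N) : tmul R M N 0 n = 0 := by
  simpa using add_tmul (R := R) (0 : M) 0 n

theorem tmul_zero (m : M) : tmul R M N m 0 = 0 := by
  simpa using tmul_add (R := R) m (0 : N) 0

theorem subsingleton_of_forall_tmul_eq_zero (h : ∀ m n, tmul R M N m n = 0) :
    Subsingleton (NCTensor R M N) := by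
  have hid : AddMonoidHom.id (NCTensor R M N) = 0 := hom_ext h
  have hzero (x : NCTensor R M N) : x = 0 := DFunLike.congr_fun hid x
  exact ⟨fun x y => (hzero x).trans (hzero y).symm⟩

variable (N) in
def rTensor {M' : Type u} [AddCommGroup M'] [Module Rᵐᵒᵖ M'] (f : M →ₗ[Rᵐᵒᵖ] M') :
    NCTensor R M N →+ NCTensor R M' N :=
  lift (fun m n => tmul R M' N (f m) n)
    (fun m m' n => by simp only [map_add, add_tmul])
    (fun m n n' => tmul_add _ _ _)
    (fun r m n => by simp only [map_smul, smul_tmul])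

section rTensor

variable {M' M'' : Type u} [AddCommGroup M'] [Module Rᵐᵒᵖ M'] [AddCommGroup M''] [Module Rᵐᵒᵖ M'']

@[simp]
theorem rTensor_tmul (f : M →ₗ[Rᵐᵒᵖ] M') (m : M) (n : N) :
    rTensor N f (tmul R M N m n) = tmul R M' N (f m) n :=
  lift_tmul _ _ _ _ _ _

theorem rTensor_id : rTensor N (LinearMap.id : M →ₗ[Rᵐᵒᵖ] M) = AddMonoidHom.id _ :=
  hom_ext fun _ _ => rTensor_tmul _ _ _

theorem rTensor_comp (g : M' →ₗ[Rᵐᵒᵖ] M'') (f : M →ₗ[Rᵐᵒᵖ] M') :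
    rTensor N (g ∘ₗ f) = (rTensor N g).comp (rTensor N f) :=
  hom_ext fun _ _ => by simp

theorem rTensor_comp_apply (g : M' →ₗ[Rᵐᵒᵖ] M'') (f : M →ₗ[Rᵐᵒᵖ] M') (x : NCTensor R M N) :
    rTensor N (g ∘ₗ f) x = rTensor N g (rTensor N f x) := by
  rw [rTensor_comp]; rfl

theorem rTensor_add (f g : M →ₗ[Rᵐᵒᵖ] M') : rTensor N (f + g) = rTensor N f + rTensor N g :=
  hom_ext fun _ _ => by simp [add_tmul]

theorem rTensor_zero : rTensor N (0 : M →ₗ[Rᵐᵒᵖ] M') = 0 :=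
  hom_ext fun _ _ => by simp [zero_tmul]

theorem eq_rTensor_of_tmul {g : NCTensor R M N →+ NCTensor R M' N} {f : M →ₗ[Rᵐᵒᵖ] M'}
    (hg : ∀ m n, g (tmul R M N m n) = tmul R M' N (f m) n) : g = rTensor N f :=
  hom_ext fun m n => by rw [hg, rTensor_tmul]

theorem exists_rTensor_eq_of_rTensor_eq_zero {F B : Type u} [AddCommGroup F] [Module Rᵐᵒᵖ F]
    [AddCommGroup B] [Module Rᵐᵒᵖ B] (e : M ≃ₗ[Rᵐᵒᵖ] F × B) {z : NCTensor R M N}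
    (hz : rTensor N (LinearMap.snd _ F B ∘ₗ e.toLinearMap) z = 0) :
    ∃ y, rTensor N (e.symm.toLinearMap ∘ₗ LinearMap.inl _ F B) y = z := by
  let j := e.symm.toLinearMap ∘ₗ LinearMap.inl _ F B
  let t := LinearMap.fst _ F B ∘ₗ e.toLinearMap
  let s := e.symm.toLinearMap ∘ₗ LinearMap.inr _ F B
  have hsplit : j ∘ₗ t + s ∘ₗ (LinearMap.snd _ F B ∘ₗ e.toLinearMap) = LinearMap.id := by
    ext x
    simp [j, t, s, ← map_add]
  refine ⟨rTensor N t z, ?_⟩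
  calc rTensor N j (rTensor N t z)
      = rTensor N j (rTensor N t z) + rTensor N s (rTensor N (LinearMap.snd _ F B ∘ₗ e) z) := by
        rw [hz, map_zero, add_zero]
    _ = rTensor N (j ∘ₗ t + s ∘ₗ (LinearMap.snd _ F B ∘ₗ e.toLinearMap)) z := by
        rw [rTensor_add, AddMonoidHom.add_apply, rTensor_comp_apply j, rTensor_comp_apply s]
    _ = z := by rw [hsplit, rTensor_id]; rfl

end rTensor

variable (R N) in
def lid : NCTensor R Rᵐᵒᵖ N ≃+ N :=
  AddMonoidHom.toAddEquiv
    (lift (fun c n => c.unop • n) (fun _ _ _ => add_smul _ _ _) (fun _ _ _ => smul_add _ _ _)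
      (fun r c n => by simp [mul_smul]))
    (AddMonoidHom.mk' (tmul R Rᵐᵒᵖ N 1) (tmul_add 1))
    (hom_ext fun c n => by
      rw [AddMonoidHom.comp_apply, lift_tmul, AddMonoidHom.mk'_apply, AddMonoidHom.id_apply,
        ← smul_tmul, smul_eq_mul, op_unop, mul_one])
    (by ext n; simp)

@[simp]
theorem lid_tmul (c : Rᵐᵒᵖ) (n : N) : lid R N (tmul R Rᵐᵒᵖ N c n) = c.unop • n := by
  simp [lid]

end NCTensor

section FiberProduct

variable {S : Type*} [Ring S] {A B F X Y : Type*} [AddCommGroup A] [Module S A]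
  [AddCommGroup B] [Module S B] [AddCommGroup F] [Module S F] [AddCommGroup X] [Module S X]
  [AddCommGroup Y] [Module S Y] (p : B →ₗ[S] Y) (π : X →ₗ[S] Y)

def fiberProduct : Submodule S (B × X) :=
  LinearMap.eqLocus (p ∘ₗ LinearMap.fst S B X) (π ∘ₗ LinearMap.snd S B X)

namespace fiberProduct

theorem mem_iff {v : B × X} : v ∈ fiberProduct p π ↔ p v.1 = π v.2 := Iff.rfl

def fst : fiberProduct p π →ₗ[S] B := LinearMap.fst S B X ∘ₗ (fiberProduct p π).subtype

def snd : fiberProduct p π →ₗ[S] X := LinearMap.snd S B X ∘ₗ (fiberProduct p π).subtype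

variable {p π}

def inl (i : A →ₗ[S] B) (hi : p ∘ₗ i = 0) : A →ₗ[S] fiberProduct p π :=
  LinearMap.codRestrict _ (LinearMap.inl S B X ∘ₗ i) fun a => by
    simp [mem_iff, ← LinearMap.comp_apply p i, hi]

def inr (ι : F →ₗ[S] X) (hι : π ∘ₗ ι = 0) : F →ₗ[S] fiberProduct p π :=
  LinearMap.codRestrict _ (LinearMap.inr S B X ∘ₗ ι) fun f => by
    simp [mem_iff, ← LinearMap.comp_apply π ι, hι]

variable {i : A →ₗ[S] B} {ι : F →ₗ[S] X}

theorem fst_comp_inl (hi : p ∘ₗ i = 0) : fst p π ∘ₗ inl i hi = i := rfl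

theorem snd_comp_inl (hi : p ∘ₗ i = 0) : snd p π ∘ₗ inl i hi = 0 := rfl

theorem snd_comp_inr (hι : π ∘ₗ ι = 0) : snd p π ∘ₗ inr ι hι = ι := rfl

theorem injective_inl (hi : p ∘ₗ i = 0) (h : Function.Injective i) :
    Function.Injective (inl (π := π) i hi) :=
  fun _ _ hab => h congr(($hab : B × X).1)

theorem injective_inr (hι : π ∘ₗ ι = 0) (h : Function.Injective ι) :
    Function.Injective (inr (p := p) ι hι) :=
  fun _ _ hab => h congr(($hab : B × X).2)

variable (p π) in
theorem surjective_fst (hπ : Function.Surjective π) : Function.Surjective (fst p π) := fun b =>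
  let ⟨x, hx⟩ := hπ (p b)
  ⟨⟨(b, x), hx.symm⟩, rfl⟩

variable (p π) in
theorem surjective_snd (hp : Function.Surjective p) : Function.Surjective (snd p π) := fun x =>
  let ⟨b, hb⟩ := hp (π x)
  ⟨⟨(b, x), hb⟩, rfl⟩

theorem exact_inl_snd (h : Function.Exact i p) :
    Function.Exact (inl (π := π) i h.linearMap_comp_eq_zero) (snd p π) := by
  refine fun v => ⟨fun hv0 => ?_, by rintro ⟨a, rfl⟩; rfl⟩
  obtain ⟨⟨b, x⟩, hv⟩ := v
  obtain rfl : x = 0 := hv0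
  obtain ⟨a, rfl⟩ := (h b).1 (by simpa [mem_iff] using hv)
  exact ⟨a, rfl⟩

theorem exact_inr_fst (h : Function.Exact ι π) :
    Function.Exact (inr (p := p) ι h.linearMap_comp_eq_zero) (fst p π) := by
  refine fun v => ⟨fun hv0 => ?_, by rintro ⟨f, rfl⟩; rfl⟩
  obtain ⟨⟨b, x⟩, hv⟩ := v
  obtain rfl : b = 0 := hv0
  obtain ⟨f, rfl⟩ := (h x).1 (by simpa [mem_iff] using hv.symm)
  exact ⟨f, rfl⟩

end fiberProduct

end FiberProduct

open NCTensor in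
theorem Tor1Zero.of_shortExact {R : Type u} [Ring R] {F X Y N : Type u}
    [AddCommGroup F] [Module Rᵐᵒᵖ F] [Module.Projective Rᵐᵒᵖ F] [AddCommGroup X] [Module Rᵐᵒᵖ X]
    [AddCommGroup Y] [Module Rᵐᵒᵖ Y] [AddCommGroup N] [Module R N]
    {ι : F →ₗ[Rᵐᵒᵖ] X} {π : X →ₗ[Rᵐᵒᵖ] Y} (hι : Function.Injective ι)
    (hπ : Function.Surjective π) (hιπ : Function.Exact ι π) (hX : Tor1Zero R X N)
    (hιN : Function.Injective (rTensor N ι)) : Tor1Zero R Y N := by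
  intro A B _ _ _ _ i p _ hi hp hip_range g hg
  have hip : Function.Exact i p := LinearMap.exact_iff.2 hip_range.symm
  let i' := fiberProduct.inl (π := π) i hip.linearMap_comp_eq_zero
  obtain ⟨s, hs⟩ := Module.projective_lifting_property (fiberProduct.fst p π) LinearMap.id
    (fiberProduct.surjective_fst p π hπ)
  obtain ⟨e, he_inr, he_fst⟩ := (fiberProduct.exact_inr_fst hιπ).splitSurjectiveEquiv
    (fiberProduct.injective_inr _ hι) ⟨s, hs⟩
  have hP : Module.Projective Rᵐᵒᵖ (fiberProduct p π) := .of_equiv' e.symm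
  have hi'N : Function.Injective (rTensor N i') :=
    hX _ _ i' (fiberProduct.snd p π) hP (fiberProduct.injective_inl _ hi)
      (fiberProduct.surjective_snd p π hp) (fiberProduct.exact_inl_snd hip).linearMap_ker_eq.symm
      _ fun _ _ => rfl
  -- An element of `A ⊗ N` dying in `B ⊗ N` comes, through `e`, from some `y` in
  -- `F ⊗ N`; its image in `X ⊗ N` is zero, so `y = 0` since `ι ⊗ N` is injective.
  rw [eq_rTensor_of_tmul hg, injective_iff_map_eq_zero]
  intro x hx
  have hfst : rTensor N (LinearMap.snd _ F B ∘ₗ e.toLinearMap) (rTensor N i' x) = 0 := by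
    rwa [← he_fst, ← rTensor_comp_apply, fiberProduct.fst_comp_inl]
  obtain ⟨y, hy⟩ := exists_rTensor_eq_of_rTensor_eq_zero e hfst
  rw [← he_inr] at hy
  have hιy : rTensor N ι y = 0 := by
    rw [← fiberProduct.snd_comp_inr (p := p) hιπ.linearMap_comp_eq_zero, rTensor_comp_apply, hy,
      ← rTensor_comp_apply, fiberProduct.snd_comp_inl, rTensor_zero]
    rfl
  have hy0 : y = 0 := (injective_iff_map_eq_zero _).1 hιN y hιy
  exact (injective_iff_map_eq_zero _).1 hi'N x (by rw [← hy, hy0, map_zero])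

theorem IsRingEpi.derivation_eq_zero {R Q M : Type u} [Ring R] [Ring Q] [AddCommGroup M]
    [Module Q M] [Module Qᵐᵒᵖ M] [SMulCommClass Q Qᵐᵒᵖ M] {φ : R →+* Q} (hepi : IsRingEpi φ)
    (d : Q →+ M) (hd : ∀ a b, d (a * b) = a • d b + op b • d a) (hφ : ∀ r, d (φ r) = 0)
    (q : Q) : d q = 0 := by
  have hd1 : d 1 = 0 := by simpa using hd 1 1
  let ω : Q →+* TrivSqZeroExt Q M :=
    { toFun := fun a => (a, d a)
      map_one' := TrivSqZeroExt.ext rfl hd1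
      map_mul' := fun a b => TrivSqZeroExt.ext rfl (hd a b)
      map_zero' := TrivSqZeroExt.ext rfl d.map_zero
      map_add' := fun a b => TrivSqZeroExt.ext rfl (d.map_add a b) }
  have hω := hepi _ (TrivSqZeroExt.inlHom Q M) ω
    (RingHom.ext fun r => TrivSqZeroExt.ext rfl (hφ r).symm)
  exact congr(($hω q).snd).symm

namespace NCTensor

variable {R Q : Type u} [Ring R] [Ring Q] {φ : R →+* Q}

section mulLeft

variable [Module Rᵐᵒᵖ Q] {N : Type u} [AddCommGroup N] [Module R N]
  (hr : ∀ (r : R) (q : Q), op r • q = q * φ r)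

def lmul (q : Q) : NCTensor R Q N →+ NCTensor R Q N :=
  lift (fun x n => tmul R Q N (q * x) n) (fun _ _ _ => by rw [mul_add, add_tmul])
    (fun _ _ _ => tmul_add _ _ _) (fun r x n => by rw [hr, ← mul_assoc, ← hr, smul_tmul])

@[simp]
theorem lmul_tmul (q x : Q) (n : N) : lmul hr q (tmul R Q N x n) = tmul R Q N (q * x) n :=
  lift_tmul _ _ _ _ _ _

def mulLeft : Q →+* AddMonoid.End (NCTensor R Q N) where
  toFun := lmul hr
  map_one' := hom_ext (g := AddMonoidHom.id _) fun _ _ => by simp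
  map_mul' a b := hom_ext (g := (lmul hr a).comp (lmul hr b)) fun _ _ => by simp [mul_assoc]
  map_zero' := hom_ext (g := 0) fun _ _ => by simp [zero_tmul]
  map_add' a b := hom_ext fun x n => by
    change _ = lmul hr a _ + lmul hr b _
    simp [add_mul, add_tmul]

end mulLeft

section mulRight

variable [Module R Q] {M : Type u} [AddCommGroup M] [Module Rᵐᵒᵖ M]
  (hl : ∀ (r : R) (q : Q), r • q = φ r * q)

def rmul (q : Q) : NCTensor R M Q →+ NCTensor R M Q :=
  lift (fun m y => tmul R M Q m (y * q)) (fun _ _ _ => add_tmul _ _ _)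
    (fun _ _ _ => by rw [add_mul, tmul_add]) (fun r m y => by rw [smul_tmul, hl, hl, mul_assoc])

@[simp]
theorem rmul_tmul (q : Q) (m : M) (y : Q) : rmul hl q (tmul R M Q m y) = tmul R M Q m (y * q) :=
  lift_tmul _ _ _ _ _ _

def mulRight : Qᵐᵒᵖ →+* AddMonoid.End (NCTensor R M Q) where
  toFun q := rmul hl q.unop
  map_one' := hom_ext (g := AddMonoidHom.id _) fun _ _ => by simp
  map_mul' a b := hom_ext (g := (rmul hl a.unop).comp (rmul hl b.unop)) fun _ _ => by
    simp [mul_assoc]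
  map_zero' := hom_ext (g := 0) fun _ _ => by simp [tmul_zero]
  map_add' a b := hom_ext fun m y => by
    change _ = rmul hl a.unop _ + rmul hl b.unop _
    simp [mul_add, tmul_add]

end mulRight

variable [Module Rᵐᵒᵖ Q] [Module R Q]

theorem one_tmul_eq_tmul_one (hr : ∀ (r : R) (q : Q), op r • q = q * φ r)
    (hl : ∀ (r : R) (q : Q), r • q = φ r * q) (hepi : IsRingEpi φ) (q : Q) :
    tmul R Q Q 1 q = tmul R Q Q q 1 := by
  let : Module Q (NCTensor R Q Q) := Module.compHom _ (mulLeft (N := Q) hr)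
  let : Module Qᵐᵒᵖ (NCTensor R Q Q) := Module.compHom _ (mulRight (M := Q) hl)
  have : SMulCommClass Q Qᵐᵒᵖ (NCTensor R Q Q) := ⟨fun a b z =>
    congr($(hom_ext (f := (lmul hr a).comp (rmul hl b.unop))
      (g := (rmul hl b.unop).comp (lmul hr a)) fun _ _ => by simp) z)⟩
  let d : Q →+ NCTensor R Q Q :=
    AddMonoidHom.mk' (tmul R Q Q 1) (tmul_add 1) -
      AddMonoidHom.mk' (tmul R Q Q · 1) (add_tmul · · 1)
  refine sub_eq_zero.1 (hepi.derivation_eq_zero d (fun a b => ?_) (fun r => ?_) q)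
  · change d (a * b) = lmul hr a (d b) + rmul hl b (d a)
    simp [d]
  · have hφr : φ r = r • (1 : Q) := by rw [hl, mul_one]
    simp only [d, AddMonoidHom.sub_apply, AddMonoidHom.mk'_apply, sub_eq_zero]
    rw [hφr, ← smul_tmul, hr, one_mul, ← hφr]

end NCTensor

section Bimorphism

variable {R Q : Type u} [Ring R] [Ring Q] {φ : R →+* Q} [Module Rᵐᵒᵖ Q]

theorem smul_one_eq_apply_unop (hr : ∀ (r : R) (q : Q), op r • q = q * φ r) (c : Rᵐᵒᵖ) :
    c • (1 : Q) = φ c.unop := by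
  rw [← op_unop c, hr, one_mul, unop_op]

theorem injective_toSpanSingleton_one (hinj : Function.Injective φ)
    (hr : ∀ (r : R) (q : Q), op r • q = q * φ r) :
    Function.Injective (LinearMap.toSpanSingleton Rᵐᵒᵖ Q 1) := fun a b hab =>
  unop_injective <| hinj <| by
    simpa only [LinearMap.toSpanSingleton_apply, smul_one_eq_apply_unop hr] using hab

theorem exact_toSpanSingleton_one_mkQ (hr : ∀ (r : R) (q : Q), op r • q = q * φ r) :
    Function.Exact (LinearMap.toSpanSingleton Rᵐᵒᵖ Q 1) (phiRange φ hr).mkQ := by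
  refine LinearMap.exact_iff.2 (SetLike.ext fun x => ?_)
  simp only [Submodule.ker_mkQ, LinearMap.mem_range, LinearMap.toSpanSingleton_apply,
    smul_one_eq_apply_unop hr]
  exact ⟨fun ⟨r, hx⟩ => ⟨op r, hx⟩, fun ⟨c, hx⟩ => ⟨c.unop, hx⟩⟩

variable [Module R Q]

open NCTensor

def NCTensor.mul' (hr : ∀ (r : R) (q : Q), op r • q = q * φ r)
    (hl : ∀ (r : R) (q : Q), r • q = φ r * q) :
    NCTensor R Q Q →+ Q :=
  lift (· * ·) add_mul mul_add fun r x y => by rw [hr, hl, mul_assoc]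

theorem injective_rTensor_toSpanSingleton_one (hr : ∀ (r : R) (q : Q), op r • q = q * φ r)
    (hl : ∀ (r : R) (q : Q), r • q = φ r * q) :
    Function.Injective (rTensor Q (LinearMap.toSpanSingleton Rᵐᵒᵖ Q 1)) := by
  have h : (mul' hr hl).comp (rTensor Q (LinearMap.toSpanSingleton Rᵐᵒᵖ Q 1)) =
      (lid R Q).toAddMonoidHom :=
    hom_ext fun c q => by
      simp [mul', LinearMap.toSpanSingleton_apply, smul_one_eq_apply_unop hr, hl]
  refine Function.Injective.of_comp (f := mul' hr hl) ?_
  rw [← AddMonoidHom.coe_comp, h]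
  exact (lid R Q).injective

theorem subsingleton_NCTensor_Kmod (hr : ∀ (r : R) (q : Q), op r • q = q * φ r)
    (hl : ∀ (r : R) (q : Q), r • q = φ r * q)
    (hepi : IsRingEpi φ) :
    Subsingleton (NCTensor R (Kmod φ hr) Q) := by
  refine subsingleton_of_forall_tmul_eq_zero fun k q => ?_
  obtain ⟨x, rfl⟩ := Submodule.Quotient.mk_surjective _ k
  have hx : tmul R Q Q x q = tmul R Q Q 1 (x * q) := by
    simpa using congr(rmul hl q $(one_tmul_eq_tmul_one hr hl hepi x)).symm
  have h1 : (phiRange φ hr).mkQ 1 = 0 := (Submodule.Quotient.mk_eq_zero _).2 ⟨1, map_one φ⟩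
  calc tmul R (Kmod φ hr) Q (Submodule.Quotient.mk x) q
      = rTensor Q (phiRange φ hr).mkQ (tmul R Q Q x q) := by rw [rTensor_tmul]; rfl
    _ = 0 := by rw [hx, rTensor_tmul, h1, zero_tmul]

end Bimorphism

/-- If `φ : R → Q` is an injective ring epimorphism with `Tor_1^R(Q, Q) = 0` and
`K = Q/φ(R)`, then `K ⊗_R Q = 0` and `Tor_1^R(K, Q) = 0`. -/
theorem K_tensor_Q_eq_zero {R Q : Type u} [Ring R] [Ring Q] (φ : R →+* Q)
    (hinj : Function.Injective φ) (hepi : IsRingEpi φ)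
    [Module Rᵐᵒᵖ Q] (hr : ∀ (r : R) (q : Q), op r • q = q * φ r)
    [Module R Q] (hl : ∀ (r : R) (q : Q), r • q = φ r * q)
    (htor : Tor1Zero R Q Q) :
    Subsingleton (NCTensor R (Kmod φ hr) Q) ∧ Tor1Zero R (Kmod φ hr) Q :=
  ⟨subsingleton_NCTensor_Kmod hr hl hepi,
    Tor1Zero.of_shortExact (injective_toSpanSingleton_one hinj hr) (Submodule.mkQ_surjective _)
      (exact_toSpanSingleton_one_mkQ hr) htor (injective_rTensor_toSpanSingleton_one hr hl)⟩
end

section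
/- Let φ : R → Q be an injective ring epimorphism and let N be a right R-module. The following are equivalent: (1) every homomorphism R → N of right R-modules extends to a right R-module morphism Q → N; (2) N is a homomorphic image of a right Q-module; (3) N is a homomorphic image of a direct sum of copies of Q. -/
open MulOpposite

universe u

section aux
variable {R Q : Type u} [Ring R] [Ring Q] (φ : R →+* Q)
variable [Module Rᵐᵒᵖ Q]
variable {N : Type u} [AddCommGroup N] [Module Rᵐᵒᵖ N]

/-- The right-module map `R → N` sending `1` to `n`. -/
def RmapN (n : N) : R →ₗ[Rᵐᵒᵖ] N where
  toFun r := op r • n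
  map_add' a b := by show op (a + b) • n = op a • n + op b • n; rw [op_add, add_smul]
  map_smul' s r := by
    show op (s • r) • n = s • op r • n
    rw [MulOpposite.smul_eq_mul_unop]
    have e : op (r * unop s) = s * op r := by rw [op_mul, op_unop]
    rw [e, mul_smul]

lemma one_to_three
    (h1 : ∀ f : R →ₗ[Rᵐᵒᵖ] N, ∃ g : Q →ₗ[Rᵐᵒᵖ] N, ∀ r : R, g (φ r) = f r) :
    ∃ (I : Type u) (h : (I →₀ Q) →ₗ[Rᵐᵒᵖ] N), Function.Surjective h := by
  choose g hg using fun n : N => h1 (RmapN n)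
  refine ⟨N, Finsupp.lsum ℕ g, fun n => ⟨Finsupp.single n 1, ?_⟩⟩
  have e1 : (Finsupp.lsum ℕ g) (Finsupp.single n 1) = g n 1 := Finsupp.lsum_single ..
  rw [e1, show (1 : Q) = φ 1 from (map_one φ).symm, hg]
  show op (1 : R) • n = n
  rw [op_one, one_smul]

lemma two_to_one (hr : ∀ (r : R) (q : Q), op r • q = q * φ r) {P : Type u}
    [AddCommGroup P] [Module Qᵐᵒᵖ P] [Module Rᵐᵒᵖ P]
    (hcompat : ∀ (r : R) (p : P), (op r : Rᵐᵒᵖ) • p = (op (φ r) : Qᵐᵒᵖ) • p)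
    (h : P →ₗ[Rᵐᵒᵖ] N) (hs : Function.Surjective h)
    (f : R →ₗ[Rᵐᵒᵖ] N) : ∃ g : Q →ₗ[Rᵐᵒᵖ] N, ∀ r : R, g (φ r) = f r := by
  obtain ⟨p, hp⟩ := hs (f 1)
  refine ⟨{ toFun := fun q => h ((op q : Qᵐᵒᵖ) • p)
            map_add' := fun a b => by
              show h (op (a + b) • p) = h (op a • p) + h (op b • p)
              rw [op_add, add_smul, map_add]
            map_smul' := fun s q => by
              show h (op (s • q) • p) = s • h (op q • p)
              have e1 : s • q = q * φ (unop s) := by rw [← hr, op_unop]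
              calc h (op (s • q) • p) = h (op (q * φ (unop s)) • p) := by rw [e1]
                _ = h ((op (φ (unop s)) * op q) • p) := by rw [op_mul]
                _ = h (op (φ (unop s)) • op q • p) := by rw [mul_smul]
                _ = h ((op (unop s) : Rᵐᵒᵖ) • (op q • p)) := by rw [hcompat]
                _ = op (unop s) • h (op q • p) := map_smul h _ _
                _ = s • h (op q • p) := by rw [op_unop] }, fun r => ?_⟩
  show h (op (φ r) • p) = f r
  rw [← hcompat, map_smul, hp, ← map_smul]
  congr 1
  rw [MulOpposite.smul_eq_mul_unop, unop_op, one_mul]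

lemma finsupp_compat (hr : ∀ (r : R) (q : Q), op r • q = q * φ r) (I : Type u) :
    ∀ (r : R) (p : I →₀ Q), (op r : Rᵐᵒᵖ) • p = (op (φ r) : Qᵐᵒᵖ) • p := by
  intro r p
  ext i
  rw [Finsupp.smul_apply, Finsupp.smul_apply, hr, MulOpposite.smul_eq_mul_unop, unop_op]

end aux

/-- For an injective ring epimorphism `φ : R → Q` and a right `R`-module `N`,
the following are equivalent: (1) every homomorphism `R → N` extends to `Q → N`;
(2) `N` is a homomorphic image of a right `Q`-module;
(3) `N` is a homomorphic image of a direct sum of copies of `Q`. -/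
theorem hdivisible_tfae {R Q : Type u} [Ring R] [Ring Q] (φ : R →+* Q)
    (hinj : Function.Injective φ) (hepi : IsRingEpi φ)
    [Module Rᵐᵒᵖ Q] (hr : ∀ (r : R) (q : Q), op r • q = q * φ r)
    (N : Type u) [AddCommGroup N] [Module Rᵐᵒᵖ N] :
    ((∀ f : R →ₗ[Rᵐᵒᵖ] N, ∃ g : Q →ₗ[Rᵐᵒᵖ] N, ∀ r : R, g (φ r) = f r) ↔
      (∃ (P : Type u) (i1 : AddCommGroup P), letI := i1; ∃ (_ : Module Qᵐᵒᵖ P),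
        ∃ (i3 : Module Rᵐᵒᵖ P), letI := i3;
          (∀ (r : R) (p : P), (op r : Rᵐᵒᵖ) • p = (op (φ r) : Qᵐᵒᵖ) • p) ∧
          ∃ h : P →ₗ[Rᵐᵒᵖ] N, Function.Surjective h)) ∧
    ((∃ (P : Type u) (i1 : AddCommGroup P), letI := i1; ∃ (_ : Module Qᵐᵒᵖ P),
        ∃ (i3 : Module Rᵐᵒᵖ P), letI := i3;
          (∀ (r : R) (p : P), (op r : Rᵐᵒᵖ) • p = (op (φ r) : Qᵐᵒᵖ) • p) ∧
          ∃ h : P →ₗ[Rᵐᵒᵖ] N, Function.Surjective h) ↔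
      (∃ (I : Type u) (h : (I →₀ Q) →ₗ[Rᵐᵒᵖ] N), Function.Surjective h)) := by
  constructor
  · constructor
    · intro h1
      obtain ⟨I, h, hs⟩ := one_to_three φ h1
      exact ⟨I →₀ Q, inferInstance, inferInstance, inferInstance,
        finsupp_compat φ hr I, h, hs⟩
    · rintro ⟨P, i1, i2, i3, hc, h, hs⟩
      exact two_to_one φ hr hc h hs
  · constructor
    · rintro ⟨P, i1, i2, i3, hc, h, hs⟩
      exact one_to_three φ (two_to_one φ hr hc h hs)
    · rintro ⟨I, h, hs⟩
      exact ⟨I →₀ Q, inferInstance, inferInstance, inferInstance,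
        finsupp_compat φ hr I, h, hs⟩
end

section
/- Let φ : R → Q be an injective ring epimorphism with Q flat as a left R-module. If M is a left R-module such that Ext^1_R(M, D) = 0 for every h-divisible left R-module D, then M has projective dimension at most 1, i.e., Ext^2_R(M, N) = 0 for every left R-module N. -/
open MulOpposite

universe u

/-- A left `R`-module `N` is flat if tensoring right `R`-modules with `N`
preserves injectivity. -/
def IsFlatLeftModule (R : Type u) [Ring R] (N : Type u) [AddCommGroup N] [Module R N] : Prop :=
  ∀ (A B : Type u) [AddCommGroup A] [AddCommGroup B] [Module Rᵐᵒᵖ A] [Module Rᵐᵒᵖ B]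
    (i : A →ₗ[Rᵐᵒᵖ] B), Function.Injective i →
    ∀ g : NCTensor R A N →+ NCTensor R B N,
      (∀ a n, g (NCTensor.tmul R A N a n) = NCTensor.tmul R B N (i a) n) →
      Function.Injective g

open CategoryTheory in
/-- The Ext group `Ext^n_A(M, N)` for modules over an arbitrary ring `A`,
computed in the abelian category of `A`-modules. -/
noncomputable abbrev extGroup (A : Type u) [Ring A] (n : ℕ) (M : Type u) [AddCommGroup M]
    [Module A M] (N : Type u) [AddCommGroup N] [Module A N] : Type u :=
  ((Ext ℤ (ModuleCat.{u} A) n).obj (Opposite.op (ModuleCat.of A M))).obj (ModuleCat.of A N)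

open CategoryTheory Limits Opposite

/-! Embed `N` into an injective module `E` and let `D = E/N`. Injective modules are h-divisible
because `R → Q` is injective, and h-divisibility passes to quotients, so `Ext¹(M, D) = 0`;
since also `Ext²(M, E) = 0`, the long exact `Ext(M, -)` sequence gives `Ext²(M, N) = 0`.
That sequence comes from `Hom(P, -)` for a projective resolution `P` of `M`, which turns
short exact sequences into short exact sequences of complexes. -/

section YonedaComplex

variable {C : Type*} [Category C] [Abelian C] (A : Type*) [Ring A] [Linear A C]

noncomputable def ChainComplex.linearYonedaObjMap (X : ChainComplex C ℕ) {Y Y' : C}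
    (u : Y ⟶ Y') : X.linearYonedaObj A Y ⟶ X.linearYonedaObj A Y' where
  f n := ModuleCat.ofHom (Linear.rightComp A (X.X n) u)
  comm' _ _ _ := by
    ext g
    exact (Category.assoc _ _ _).symm

noncomputable def ChainComplex.linearYonedaObjShortComplex (X : ChainComplex C ℕ)
    (S : ShortComplex C) : ShortComplex (CochainComplex (ModuleCat A) ℕ) :=
  ShortComplex.mk (X.linearYonedaObjMap A S.f) (X.linearYonedaObjMap A S.g) (by
    ext n (g : X.X n ⟶ S.X₁)
    change (g ≫ S.f) ≫ S.g = 0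
    rw [Category.assoc, S.zero, comp_zero])

lemma ChainComplex.shortExact_linearYonedaObjShortComplex (X : ChainComplex C ℕ)
    [∀ n, Projective (X.X n)] {S : ShortComplex C} (hS : S.ShortExact) :
    (X.linearYonedaObjShortComplex A S).ShortExact := by
  have := hS.mono_f
  have := hS.epi_g
  refine HomologicalComplex.shortExact_of_degreewise_shortExact _ fun n => .mk' ?_ ?_ ?_
  · rw [ShortComplex.moduleCat_exact_iff]
    intro g hg
    exact ⟨hS.exact.lift g hg, hS.exact.lift_f g hg⟩
  · rw [ModuleCat.mono_iff_injective]
    intro g g' h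
    exact (cancel_mono S.f).mp h
  · rw [ModuleCat.epi_iff_surjective]
    intro g
    exact ⟨Projective.factorThru g S.g, Projective.factorThru_comp g S.g⟩

lemma ChainComplex.exactAt_linearYonedaObj_of_injective (X : ChainComplex C ℕ) (E : C)
    [Injective E] (n : ℕ) (hX : X.ExactAt (n + 1)) :
    (X.linearYonedaObj A E).ExactAt (n + 1) := by
  rw [HomologicalComplex.exactAt_iff' _ n (n + 1) (n + 2) (by simp) (by simp),
    ShortComplex.moduleCat_exact_iff]
  rw [HomologicalComplex.exactAt_iff' _ (n + 2) (n + 1) n (by simp) (by simp)] at hX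
  intro h hh
  exact ⟨hX.descToInjective h hh, hX.comp_descToInjective h hh⟩

variable [EnoughProjectives C]

lemma isZero_Ext_succ_of_injective (Z E : C) [Injective E] (n : ℕ) :
    IsZero (((Ext A C (n + 1)).obj (op Z)).obj E) := by
  let P := projectiveResolution Z
  refine IsZero.of_iso ?_ (P.isoExt (n + 1) E)
  rw [← HomologicalComplex.exactAt_iff_isZero_homology]
  exact P.complex.exactAt_linearYonedaObj_of_injective A E n (P.complex_exactAt_succ n)

lemma isZero_Ext_succ_of_shortExact (Z : C) {S : ShortComplex C} (hS : S.ShortExact) (n : ℕ)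
    (h₃ : IsZero (((Ext A C n).obj (op Z)).obj S.X₃))
    (h₂ : IsZero (((Ext A C (n + 1)).obj (op Z)).obj S.X₂)) :
    IsZero (((Ext A C (n + 1)).obj (op Z)).obj S.X₁) := by
  let P := projectiveResolution Z
  have hT := P.complex.shortExact_linearYonedaObjShortComplex A hS
  refine IsZero.of_iso ((hT.homology_exact₁ n (n + 1) rfl).isZero_X₂ ?_ ?_) (P.isoExt (n + 1) S.X₁)
  · exact (h₃.of_iso (P.isoExt n S.X₃).symm).eq_of_src _ _
  · exact (h₂.of_iso (P.isoExt (n + 1) S.X₂).symm).eq_of_tgt _ _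

end YonedaComplex

section HDivisible

variable (R : Type u) [Ring R] (Q : Type u) [AddCommGroup Q] [Module R Q]

def IsHDivisible (D : Type u) [AddCommGroup D] [Module R D] : Prop :=
  ∃ (I : Type u) (g : (I →₀ Q) →ₗ[R] D), Function.Surjective g

variable {R Q} {D D' : Type u} [AddCommGroup D] [Module R D] [AddCommGroup D'] [Module R D']

lemma IsHDivisible.of_surjective (hD : IsHDivisible R Q D) (f : D →ₗ[R] D')
    (hf : Function.Surjective f) : IsHDivisible R Q D' := by
  obtain ⟨I, g, hg⟩ := hD
  exact ⟨I, f ∘ₗ g, hf.comp hg⟩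

lemma Module.Injective.isHDivisible [Module.Injective R D] (ι : R →ₗ[R] Q)
    (hι : Function.Injective ι) : IsHDivisible R Q D := by
  have hext (d : D) : ∃ f : Q →ₗ[R] D, f (ι 1) = d := by
    obtain ⟨f, hf⟩ := Module.Injective.extension_property R D R Q ι hι
      (LinearMap.toSpanSingleton R D d)
    exact ⟨f, by simpa using LinearMap.congr_fun hf 1⟩
  choose f hf using hext
  refine ⟨D, Finsupp.lsum ℕ f, fun d => ⟨Finsupp.single d (ι 1), ?_⟩⟩
  simp [hf]

end HDivisible

theorem perp_hdivisible_pdim_le_one_general {R Q : Type u} [Ring R] [Ring Q]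
    (φ : R →+* Q) (hinj : Function.Injective φ)
    [Module R Q] (hl : ∀ (r : R) (q : Q), r • q = φ r * q)
    (M : Type u) [AddCommGroup M] [Module R M]
    (hM : ∀ (D : Type u) [AddCommGroup D] [Module R D],
      (∃ (I : Type u) (g : (I →₀ Q) →ₗ[R] D), Function.Surjective g) →
      Subsingleton (extGroup R 1 M D)) :
    ∀ (N : Type u) [AddCommGroup N] [Module R N], Subsingleton (extGroup R 2 M N) := by
  intro N _ _
  have hφ : Function.Injective (LinearMap.toSpanSingleton R Q 1) := fun r s h =>
    hinj (by simpa [hl] using h)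
  let ι := Injective.ι (ModuleCat.of R N)
  let S := ShortComplex.cokernelSequence ι
  have hS : S.ShortExact :=
    .mk' (ShortComplex.cokernelSequence_exact ι) (inferInstanceAs (Mono ι)) inferInstance
  have : Injective (ModuleCat.of R S.X₂) := inferInstanceAs (Injective (Injective.under _))
  have := Module.injective_module_of_injective_object R S.X₂
  have hD : IsHDivisible R Q S.X₃ :=
    (Module.Injective.isHDivisible _ hφ).of_surjective S.g.hom
      ((ModuleCat.epi_iff_surjective _).mp inferInstance)
  have := hM _ hD
  have hExt1 : IsZero (((Ext ℤ (ModuleCat R) 1).obj (op (ModuleCat.of R M))).obj S.X₃) :=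
    ModuleCat.isZero_of_subsingleton _
  exact ModuleCat.subsingleton_of_isZero <|
    isZero_Ext_succ_of_shortExact ℤ _ hS 1 hExt1 (isZero_Ext_succ_of_injective ℤ _ _ 1)

/-- If `φ : R → Q` is an injective ring epimorphism with `Q` flat as a left `R`-module,
and `M` is a left `R`-module with `Ext^1_R(M, D) = 0` for every h-divisible left
`R`-module `D`, then `M` has projective dimension at most 1: `Ext^2_R(M, N) = 0`
for every left `R`-module `N`. -/
theorem perp_hdivisible_pdim_le_one {R Q : Type u} [Ring R] [Ring Q]
    (φ : R →+* Q) (hinj : Function.Injective φ) (hepi : IsRingEpi φ)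
    [Module R Q] (hl : ∀ (r : R) (q : Q), r • q = φ r * q)
    (hflat : IsFlatLeftModule R Q)
    (M : Type u) [AddCommGroup M] [Module R M]
    (hM : ∀ (D : Type u) [AddCommGroup D] [Module R D],
      (∃ (I : Type u) (g : (I →₀ Q) →ₗ[R] D), Function.Surjective g) →
      Subsingleton (extGroup R 1 M D)) :
    ∀ (N : Type u) [AddCommGroup N] [Module R N], Subsingleton (extGroup R 2 M N) :=
  perp_hdivisible_pdim_le_one_general φ hinj hl M hM
end

section
/- Let R = End(V_k) be the endomorphism ring of an infinite-dimensional right vector space V over a division ring k, and let S be the set of right-invertible elements of R (the surjective endomorphisms of V). Then the right Ore localization R[S^{-1}] does not exist: any ring Q with a ring homomorphism φ : R → Q sending every element of S to an invertible element of Q must be the zero ring, since there exist f, g ∈ S and f', g' ∈ R with ff' = 1, gg' = 1, fg' = 0, gf' = 0, f'f + g'g = 1, forcing 1 = 0 in Q. -/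
universe u

/-- Let `R = End(V_k)` be the endomorphism ring of an infinite-dimensional right vector
space over a division ring `k`, and `S ⊆ R` the set of surjective endomorphisms
(the right-invertible elements). Then there are `f, g ∈ S` and `f', g' ∈ R` with
`ff' = 1`, `gg' = 1`, `fg' = 0`, `gf' = 0`, `f'f + g'g = 1`; consequently any ring `T`
with a ring homomorphism `ψ : R → T` inverting every element of `S` is the zero ring. -/
theorem no_ore_localization_of_endomorphism_ring (k : Type u) [DivisionRing k]
    (V : Type u) [AddCommGroup V] [Module kᵐᵒᵖ V] (hV : ¬ Module.Finite kᵐᵒᵖ V) :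
    (∃ f g f' g' : Module.End kᵐᵒᵖ V, Function.Surjective f ∧ Function.Surjective g ∧
      f * f' = 1 ∧ g * g' = 1 ∧ f * g' = 0 ∧ g * f' = 0 ∧ f' * f + g' * g = 1) ∧
    ∀ (T : Type u) [Ring T] (ψ : Module.End kᵐᵒᵖ V →+* T),
      (∀ s : Module.End kᵐᵒᵖ V, Function.Surjective s → IsUnit (ψ s)) →
      (1 : T) = 0 := by
  -- get an infinite basis
  obtain ⟨ι, b⟩ := Module.Free.exists_basis (R := kᵐᵒᵖ) (M := V)
  have hinf : Infinite ι := by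
    rw [← not_finite_iff_infinite]
    intro h
    exact hV (Module.Finite.of_basis b)
  -- an equivalence ι ≃ ι ⊕ ι
  have hcard : (Cardinal.mk ι = Cardinal.mk (ι ⊕ ι)) := by
    simp only [Cardinal.mk_sum, Cardinal.lift_id]
    exact (Cardinal.add_eq_self (Cardinal.aleph0_le_mk ι)).symm
  obtain ⟨eι⟩ := Cardinal.eq.mp hcard
  -- the linear equivalence V ≃ V × V
  let e : V ≃ₗ[kᵐᵒᵖ] V × V := b.equiv (b.prod b) eι
  let f : Module.End kᵐᵒᵖ V := (LinearMap.fst kᵐᵒᵖ V V) ∘ₗ (e : V →ₗ[kᵐᵒᵖ] V × V)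
  let g : Module.End kᵐᵒᵖ V := (LinearMap.snd kᵐᵒᵖ V V) ∘ₗ (e : V →ₗ[kᵐᵒᵖ] V × V)
  let f' : Module.End kᵐᵒᵖ V := (e.symm : V × V →ₗ[kᵐᵒᵖ] V) ∘ₗ (LinearMap.inl kᵐᵒᵖ V V)
  let g' : Module.End kᵐᵒᵖ V := (e.symm : V × V →ₗ[kᵐᵒᵖ] V) ∘ₗ (LinearMap.inr kᵐᵒᵖ V V)
  have hf : Function.Surjective f := by
    intro v
    exact ⟨e.symm (v, 0), by simp [f]⟩
  have hg : Function.Surjective g := by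
    intro v
    exact ⟨e.symm (0, v), by simp [g]⟩
  have hff' : f * f' = 1 := by
    ext v; simp [f, f', Module.End.mul_apply]
  have hgg' : g * g' = 1 := by
    ext v; simp [g, g', Module.End.mul_apply]
  have hfg' : f * g' = 0 := by
    ext v; simp [f, g', Module.End.mul_apply]
  have hgf' : g * f' = 0 := by
    ext v; simp [g, f', Module.End.mul_apply]
  have hsum : f' * f + g' * g = 1 := by
    ext v
    simp only [LinearMap.add_apply, Module.End.mul_apply, Module.End.one_apply, f, f', g, g',
      LinearMap.comp_apply, LinearMap.coe_coe, LinearMap.fst_apply, LinearMap.snd_apply,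
      LinearMap.inl_apply, LinearMap.inr_apply]
    rw [← map_add]
    simp
  refine ⟨⟨f, g, f', g', hf, hg, hff', hgg', hfg', hgf', hsum⟩, ?_⟩
  intro T _ ψ hψ
  obtain ⟨uf, huf⟩ := hψ f hf
  obtain ⟨ug, hug⟩ := hψ g hg
  have h1 : ψ f * ψ f' = 1 := by rw [← map_mul, hff', map_one]
  have h2 : ψ g * ψ g' = 1 := by rw [← map_mul, hgg', map_one]
  have hf'inv : ψ f' * ψ f = 1 := by
    have h1' : (↑uf : T) * ψ f' = 1 := by rw [huf]; exact h1
    have hfe : ψ f' = ↑uf⁻¹ := by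
      calc ψ f' = ↑uf⁻¹ * (↑uf * ψ f') := by rw [← mul_assoc, Units.inv_mul, one_mul]
        _ = ↑uf⁻¹ := by rw [h1', mul_one]
    rw [hfe, ← huf]
    exact uf.inv_mul
  have hg'inv : ψ g' * ψ g = 1 := by
    have h2' : (↑ug : T) * ψ g' = 1 := by rw [hug]; exact h2
    have hge : ψ g' = ↑ug⁻¹ := by
      calc ψ g' = ↑ug⁻¹ * (↑ug * ψ g') := by rw [← mul_assoc, Units.inv_mul, one_mul]
        _ = ↑ug⁻¹ := by rw [h2', mul_one]
    rw [hge, ← hug]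
    exact ug.inv_mul
  have : (1 : T) = 1 + 1 := by
    have hc := congrArg ψ hsum
    rw [map_add, map_mul, map_mul, map_one, hf'inv, hg'inv] at hc
    exact hc.symm
  have h0 : (1 : T) + 0 = 1 + 1 := by rw [add_zero]; exact this
  exact (add_left_cancel h0).symm
end

section
/- Let R be a ring, φ : R → Q an injective ring epimorphism with Q flat as a left R-module, and suppose Q is directly finite (one-sided inverses in Q are two-sided). Let S = {s ∈ R : sQ = Q} be the set of elements of R right-invertible in Q. Then every element of S is a regular element of R and is invertible in Q. -/
open MulOpposite

universe u

/-- If `φ : R → Q` is an injective ring epimorphism with `Q` flat as a left `R`-module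
and `Q` directly finite, then every element `s ∈ R` with `sQ = Q` (i.e. `φ s` right
invertible in `Q`) is a regular element of `R` and is invertible in `Q`. -/
theorem right_invertible_regular_invertible {R Q : Type u} [Ring R] [Ring Q]
    (φ : R →+* Q) (hinj : Function.Injective φ) (hepi : IsRingEpi φ)
    [Module R Q] (hl : ∀ (r : R) (q : Q), r • q = φ r * q)
    (hflat : IsFlatLeftModule R Q)
    (hdf : ∀ x y : Q, x * y = 1 → y * x = 1) :
    ∀ s : R, (∃ q : Q, φ s * q = 1) →
      IsUnit (φ s) ∧ (∀ a : R, s * a = 0 → a = 0) ∧ (∀ a : R, a * s = 0 → a = 0) := by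
  rintro s ⟨q, hq⟩
  have hq' : q * φ s = 1 := hdf _ _ hq
  refine ⟨⟨⟨φ s, q, hq, hq'⟩, rfl⟩, ?_, ?_⟩
  · intro a ha
    apply hinj
    have : φ s * φ a = 0 := by rw [← map_mul, ha, map_zero]
    calc φ a = q * (φ s * φ a) := by rw [← mul_assoc, hq', one_mul]
    _ = 0 := by rw [this, mul_zero]
    _ = φ 0 := (map_zero φ).symm
  · intro a ha
    apply hinj
    have : φ a * φ s = 0 := by rw [← map_mul, ha, map_zero]
    calc φ a = (φ a * φ s) * q := by rw [mul_assoc, hq, mul_one]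
    _ = 0 := by rw [this, zero_mul]
    _ = φ 0 := (map_zero φ).symm
end
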